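/- arXiv:1203.1222 — 8 statements merged into one kernel-verified Lean document; each statement's English description precedes it below -/
import Mathlib

section
/- Let V be a set and let f, g : V → V be self-maps with f ∘ g = g ∘ f. Suppose g is finite-to-one, i.e., the preimage g⁻¹({Q}) is finite for every Q ∈ V. Then a point P ∈ V satisfies g(P) ∈ Pre(f) if and only if P ∈ Pre(f); that is, g⁻¹(Pre(f)) = Pre(f). If moreover g is surjective, then g(Pre(f)) = Pre(f). -/
/-!
If `g P` is preperiodic for `f`, then `g` sends some `y = f^[l] P` to a periodic point of `f`, of
period `n > 0` say. By commutativity all the points `f^[k * n] y` lie in the fibre of `g` over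
`g y`, which is finite, so two of them coincide and `P` is preperiodic.
-/

open Set

namespace Function

variable {α : Type*} {f g : α → α} {x : α}

def preperiodicPts (f : α → α) : Set α :=
  {x | ∃ m l : ℕ, l < m ∧ f^[m] x = f^[l] x}

theorem mem_preperiodicPts_iff :
    x ∈ preperiodicPts f ↔ ∃ l n : ℕ, 0 < n ∧ IsPeriodicPt f n (f^[l] x) := by
  constructor
  · rintro ⟨m, l, hlm, h⟩
    refine ⟨l, m - l, by omega, ?_⟩
    rw [IsPeriodicPt, IsFixedPt, ← iterate_add_apply, Nat.sub_add_cancel hlm.le, h]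
  · rintro ⟨l, n, hn, h⟩
    exact ⟨n + l, l, by omega, by rw [iterate_add_apply]; exact h.eq⟩

theorem mem_preperiodicPts_of_iterate_mem {l : ℕ} (h : f^[l] x ∈ preperiodicPts f) :
    x ∈ preperiodicPts f := by
  obtain ⟨m, k, hkm, h⟩ := h
  exact ⟨m + l, k + l, by omega, by simpa only [iterate_add_apply] using h⟩

theorem preperiodicPts_iterate_subset {n : ℕ} (hn : 0 < n) :
    preperiodicPts f^[n] ⊆ preperiodicPts f := by
  rintro x ⟨m, l, hlm, h⟩
  exact ⟨n * m, n * l, Nat.mul_lt_mul_of_pos_left hlm hn, by simpa only [iterate_mul] using h⟩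

theorem mem_preperiodicPts_of_forall_iterate_mem {s : Set α} (hs : s.Finite)
    (h : ∀ k : ℕ, f^[k] x ∈ s) : x ∈ preperiodicPts f := by
  obtain ⟨j, k, hjk, hx⟩ := hs.exists_lt_map_eq_of_forall_mem h
  exact ⟨k, j, hjk, hx.symm⟩

namespace Commute

theorem mapsTo_preperiodicPts (h : Function.Commute f g) :
    MapsTo g (preperiodicPts f) (preperiodicPts f) := by
  rintro x ⟨m, l, hlm, hx⟩
  exact ⟨m, l, hlm, by rw [(h.iterate_left m).eq, (h.iterate_left l).eq, hx]⟩

theorem mem_preperiodicPts_of_apply_mem (h : Function.Commute f g) (hg : ∀ y, (g ⁻¹' {y}).Finite)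
    (hx : g x ∈ preperiodicPts f) : x ∈ preperiodicPts f := by
  obtain ⟨l, n, hn, hper⟩ := mem_preperiodicPts_iff.1 hx
  set y := f^[l] x
  rw [(h.iterate_left l).eq] at hper
  have hfibre : ∀ k : ℕ, (f^[n])^[k] y ∈ g ⁻¹' {g y} := fun k => by
    rw [mem_preimage, mem_singleton_iff, ← iterate_mul, ← (h.iterate_left _).eq]
    exact (hper.mul_const k).eq
  exact mem_preperiodicPts_of_iterate_mem <|
    preperiodicPts_iterate_subset hn (mem_preperiodicPts_of_forall_iterate_mem (hg _) hfibre)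

theorem preimage_preperiodicPts (h : Function.Commute f g) (hg : ∀ y, (g ⁻¹' {y}).Finite) :
    g ⁻¹' preperiodicPts f = preperiodicPts f :=
  Subset.antisymm (fun _ hx => h.mem_preperiodicPts_of_apply_mem hg hx) h.mapsTo_preperiodicPts

theorem image_preperiodicPts (h : Function.Commute f g) (hg : ∀ y, (g ⁻¹' {y}).Finite)
    (hsurj : Surjective g) : g '' preperiodicPts f = preperiodicPts f := by
  nth_rw 1 [← h.preimage_preperiodicPts hg]
  exact image_preimage_eq _ hsurj

end Commute

end Function

/-- If `f ∘ g = g ∘ f` and `g` is finite-to-one, then `g ⁻¹' (Pre f) = Pre f`;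
if moreover `g` is surjective then `g '' (Pre f) = Pre f`. -/
theorem finite_to_one_preimage_preper {V : Type*} (f g : V → V) (hcomm : f ∘ g = g ∘ f)
    (hfto : ∀ Q : V, (g ⁻¹' {Q}).Finite) :
    g ⁻¹' {P | ∃ m l : ℕ, l < m ∧ f^[m] P = f^[l] P} =
        {P | ∃ m l : ℕ, l < m ∧ f^[m] P = f^[l] P} ∧
      (Function.Surjective g →
        g '' {P | ∃ m l : ℕ, l < m ∧ f^[m] P = f^[l] P} =
          {P | ∃ m l : ℕ, l < m ∧ f^[m] P = f^[l] P}) := by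
  have hc : Function.Commute f g := congrFun hcomm
  exact ⟨hc.preimage_preperiodicPts hfto, hc.image_preperiodicPts hfto⟩
end

section
/- Let f, g : ℂ^n → ℂ^n be differentiable maps (for instance polynomial maps) with f ∘ g = g ∘ f. Let P ∈ ℂ^n be a periodic point of f of exact period l, suppose g(P) is a periodic point of f of exact period l', and suppose P is not a critical point of g, i.e., det D(g)(P) ≠ 0. Then l' divides l and det D(f^l)(P) = (det D(f^{l'})(g(P)))^{l/l'}. -/
/-!
Since `g` commutes with `f`, it maps `f`-periodic points to `f`-periodic points of the same
period, so `f^[l] (g P) = g P` and the exact period `l'` of `g P` divides `l`. Differentiating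
`g ∘ f^[l] = f^[l] ∘ g` at the fixed point `P` of `f^[l]` gives
`Dg(P) ∘ Df^[l](P) = Df^[l](g P) ∘ Dg(P)`; taking determinants and cancelling `det Dg(P) ≠ 0`
gives `det Df^[l](P) = det Df^[l](g P)`, and the chain rule along the fixed point `g P` of
`f^[l']` turns the right side into `(det Df^[l'](g P))^(l/l')`.
-/

open Function

theorem Function.minimalPeriod_eq_of_isPeriodicPt {α : Type*} {f : α → α} {x : α} {n : ℕ}
    (hn : 0 < n) (hx : IsPeriodicPt f n x) (hexact : ∀ k, 1 ≤ k → k < n → f^[k] x ≠ x) :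
    minimalPeriod f x = n := by
  refine (hx.minimalPeriod_le hn).eq_or_lt.resolve_right fun hlt => ?_
  exact hexact _ (hx.minimalPeriod_pos hn) hlt (isPeriodicPt_minimalPeriod f x)

namespace ContinuousLinearMap

variable {R M : Type*} [CommRing R] [TopologicalSpace M] [AddCommGroup M] [Module R M]

theorem det_comp (A B : M →L[R] M) : (A.comp B).det = A.det * B.det := by
  rw [det, toLinearMap_comp, LinearMap.det_comp]

theorem det_pow (A : M →L[R] M) (k : ℕ) : (A ^ k).det = A.det ^ k := by
  rw [det, toLinearMap_pow, map_pow]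

end ContinuousLinearMap

section DetFDeriv

variable {𝕜 E : Type*} [NontriviallyNormedField 𝕜] [NormedAddCommGroup E] [NormedSpace 𝕜 E]

theorem det_fderiv_iterate_of_isFixedPt {h : E → E} {x : E} (hh : DifferentiableAt 𝕜 h x)
    (hx : IsFixedPt h x) (k : ℕ) : (fderiv 𝕜 h^[k] x).det = (fderiv 𝕜 h x).det ^ k := by
  rw [(hh.hasFDerivAt.iterate hx k).fderiv, ContinuousLinearMap.det_pow]

theorem det_fderiv_eq_of_commute {h g : E → E} {x : E} (hcomm : Function.Commute h g)
    (hx : IsFixedPt h x) (hh : DifferentiableAt 𝕜 h x) (hhg : DifferentiableAt 𝕜 h (g x))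
    (hg : DifferentiableAt 𝕜 g x) (hcrit : (fderiv 𝕜 g x).det ≠ 0) :
    (fderiv 𝕜 h x).det = (fderiv 𝕜 h (g x)).det := by
  have hchain : (fderiv 𝕜 g x).comp (fderiv 𝕜 h x) = (fderiv 𝕜 h (g x)).comp (fderiv 𝕜 g x) := by
    have hgh : HasFDerivAt (g ∘ h) ((fderiv 𝕜 g x).comp (fderiv 𝕜 h x)) x := by
      have hg' : DifferentiableAt 𝕜 g (h x) := by rwa [hx.eq]
      have := hg'.hasFDerivAt.comp x hh.hasFDerivAt
      rwa [hx.eq] at this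
    have hhg' : HasFDerivAt (h ∘ g) ((fderiv 𝕜 h (g x)).comp (fderiv 𝕜 g x)) x :=
      hhg.hasFDerivAt.comp x hg.hasFDerivAt
    exact hgh.unique (hcomm.comp_eq.symm ▸ hhg')
  have hdet := congrArg ContinuousLinearMap.det hchain
  rw [ContinuousLinearMap.det_comp, ContinuousLinearMap.det_comp, mul_comm] at hdet
  exact mul_right_cancel₀ hcrit hdet

end DetFDeriv

theorem multiplier_of_commuting_general {n : ℕ} (f g : (Fin n → ℂ) → (Fin n → ℂ))
    (hf : Differentiable ℂ f) (hg : Differentiable ℂ g)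
    (hcomm : f ∘ g = g ∘ f)
    (P : Fin n → ℂ) (l l' : ℕ) (hl' : 1 ≤ l')
    (hPl : f^[l] P = P)
    (hgPl : f^[l'] (g P) = g P) (hgPexact : ∀ k : ℕ, 1 ≤ k → k < l' → f^[k] (g P) ≠ g P)
    (hcrit : (fderiv ℂ g P).det ≠ 0) :
    l' ∣ l ∧ (fderiv ℂ (f^[l]) P).det = ((fderiv ℂ (f^[l']) (g P)).det) ^ (l / l') := by
  have hfg : Function.Commute f g := congrFun hcomm
  have hperiod : minimalPeriod f (g P) = l' := minimalPeriod_eq_of_isPeriodicPt hl' hgPl hgPexact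
  obtain ⟨q, rfl⟩ : l' ∣ l := hperiod ▸ (IsPeriodicPt.map hPl hfg.symm).minimalPeriod_dvd
  refine ⟨dvd_mul_right l' q, ?_⟩
  rw [Nat.mul_div_cancel_left q hl',
    det_fderiv_eq_of_commute (hfg.iterate_left _) hPl (hf.iterate _).differentiableAt
      (hf.iterate _).differentiableAt hg.differentiableAt hcrit,
    iterate_mul, det_fderiv_iterate_of_isFixedPt (hf.iterate l').differentiableAt hgPl]

/-- Let `f, g` be differentiable commuting self-maps of `ℂ^n`, `P` an `f`-periodic point of
exact period `l`, `g P` an `f`-periodic point of exact period `l'`, and suppose `P` is not a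
critical point of `g`.  Then `l'` divides `l` and
`det D(f^[l])(P) = (det D(f^[l'])(g P))^(l/l')`. -/
theorem multiplier_of_commuting {n : ℕ} (f g : (Fin n → ℂ) → (Fin n → ℂ))
    (hf : Differentiable ℂ f) (hg : Differentiable ℂ g)
    (hcomm : f ∘ g = g ∘ f)
    (P : Fin n → ℂ) (l l' : ℕ) (hl : 1 ≤ l) (hl' : 1 ≤ l')
    (hPl : f^[l] P = P) (hPexact : ∀ k : ℕ, 1 ≤ k → k < l → f^[k] P ≠ P)
    (hgPl : f^[l'] (g P) = g P) (hgPexact : ∀ k : ℕ, 1 ≤ k → k < l' → f^[k] (g P) ≠ g P)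
    (hcrit : (fderiv ℂ g P).det ≠ 0) :
    l' ∣ l ∧ (fderiv ℂ (f^[l]) P).det = ((fderiv ℂ (f^[l']) (g P)).det) ^ (l / l') :=
  multiplier_of_commuting_general f g hf hg hcomm P l l' hl' hPl hgPl hgPexact hcrit
end

section
/- Let K be a subfield of ℂ, and let f, g : ℂ^n → ℂ^n be polynomial maps all of whose coefficients lie in K, with f ∘ g = g ∘ f. Let P ∈ K^n be a periodic point of f of exact period l, and suppose det D(g)(P) ≠ 0. If for every divisor l₀ of l with l₀ > 1 there is no element c ∈ K with c^{l₀} = det D(f^l)(P), then g preserves the f-period of P: g(P) is a periodic point of f of exact period l. -/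
/-!
Suppose `g P` had `f`-period `k < l`, and let `m ∣ l` be its minimal period, `l = m s` with
`s > 1`. The multiplier of `f^[l]` at `g P` is then the `s`-th power of `det D(f^[m])(g P)`, a
product of Jacobian determinants of `f` along the orbit of `g P`; that orbit stays in `K^n`, so
this number lies in `K`. On the other hand `g` commutes with `f^[l]` and is a local
diffeomorphism at the fixed point `P` of `f^[l]`, so by the chain rule `f^[l]` has the same
multiplier at `g P` as at `P`, which therefore has an `s`-th root in `K`.
-/

open MvPolynomial Function

theorem Matrix.det_mem {R S : Type*} [CommRing R] [SetLike S R] [SubringClass S R] {s : S}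
    {ι : Type*} [Fintype ι] [DecidableEq ι] {M : Matrix ι ι R} (hM : ∀ i j, M i j ∈ s) :
    M.det ∈ s := by
  rw [Matrix.det_apply]
  exact sum_mem fun σ _ => zsmul_mem (prod_mem fun i _ => hM _ _) _

theorem Function.IsPeriodicPt.exists_minimalPeriod_mul_eq {α : Type*} {f : α → α} {x : α}
    {k l : ℕ} (hl : IsPeriodicPt f l x) (hk : IsPeriodicPt f k x) (hk0 : 0 < k) (hkl : k < l) :
    ∃ s, 1 < s ∧ minimalPeriod f x * s = l := by
  obtain ⟨s, hs⟩ := hl.minimalPeriod_dvd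
  refine ⟨s, ?_, hs.symm⟩
  by_contra! hs1
  have := hk.minimalPeriod_le hk0
  have := Nat.mul_le_mul_left (minimalPeriod f x) hs1
  omega

section Multiplier

variable {𝕜 : Type*} [NontriviallyNormedField 𝕜] {E : Type*} [NormedAddCommGroup E]
  [NormedSpace 𝕜 E]

theorem det_fderiv_comp {u v : E → E} {x : E} (hu : DifferentiableAt 𝕜 u (v x))
    (hv : DifferentiableAt 𝕜 v x) :
    (fderiv 𝕜 (u ∘ v) x).det = (fderiv 𝕜 u (v x)).det * (fderiv 𝕜 v x).det := by
  rw [fderiv_comp x hu hv]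
  exact LinearMap.det_comp _ _

theorem det_fderiv_iterate {f : E → E} (hf : Differentiable 𝕜 f) (n : ℕ) (x : E) :
    (fderiv 𝕜 f^[n] x).det = ∏ j ∈ Finset.range n, (fderiv 𝕜 f (f^[j] x)).det := by
  induction n with
  | zero => simp [ContinuousLinearMap.det]
  | succ n ih =>
    rw [iterate_succ', det_fderiv_comp (hf _) ((hf.iterate n) x), Finset.prod_range_succ, ih,
      mul_comm]

theorem det_fderiv_iterate_mul_of_isPeriodicPt {f : E → E} (hf : Differentiable 𝕜 f) {m : ℕ}
    {x : E} (hx : IsPeriodicPt f m x) (s : ℕ) :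
    (fderiv 𝕜 f^[m * s] x).det = (fderiv 𝕜 f^[m] x).det ^ s := by
  rw [iterate_mul, det_fderiv_iterate (hf.iterate m),
    Finset.prod_congr rfl fun j _ => by rw [(IsFixedPt.iterate hx j).eq], Finset.prod_const,
    Finset.card_range]

theorem det_fderiv_apply_eq_of_commute {g h : E → E} (hgh : Function.Commute h g) {x : E}
    (hx : IsFixedPt h x) (hg : DifferentiableAt 𝕜 g x) (hhx : DifferentiableAt 𝕜 h x)
    (hhgx : DifferentiableAt 𝕜 h (g x)) (hdet : (fderiv 𝕜 g x).det ≠ 0) :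
    (fderiv 𝕜 h (g x)).det = (fderiv 𝕜 h x).det := by
  have hcomp_hg := det_fderiv_comp hhgx hg
  have hcomp_gh : (fderiv 𝕜 (g ∘ h) x).det = (fderiv 𝕜 g x).det * (fderiv 𝕜 h x).det := by
    rw [det_fderiv_comp (by rwa [hx.eq]) hhx, hx.eq]
  rw [hgh.comp_eq, hcomp_gh] at hcomp_hg
  exact mul_right_cancel₀ hdet (hcomp_hg.symm.trans (mul_comm _ _))

end Multiplier

section Jacobian

variable {R : Type*} [CommRing R] {σ : Type*} {S : Type*} [SetLike S R] [SubringClass S R]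
  {s : S} {p : σ → MvPolynomial σ R}

noncomputable def MvPolynomial.jacobian (p : σ → MvPolynomial σ R) (x : σ → R) :
    Matrix σ σ R :=
  Matrix.of fun i j => eval x (pderiv j (p i))

theorem MvPolynomial.mapsTo_of_eval_eq {F : (σ → R) → σ → R}
    (hF : ∀ x i, F x i = eval x (p i)) (hp : ∀ i m, (p i).coeff m ∈ s) :
    Set.MapsTo F {x | ∀ i, x i ∈ s} {x | ∀ i, x i ∈ s} :=
  fun x hx i => hF x i ▸ eval_mem (fun m _ => hp i m) hx

theorem MvPolynomial.det_jacobian_mem [Fintype σ] [DecidableEq σ]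
    (hp : ∀ i m, (p i).coeff m ∈ s) {x : σ → R} (hx : ∀ i, x i ∈ s) :
    (jacobian p x).det ∈ s := by
  refine Matrix.det_mem fun i j => eval_mem (fun m _ => ?_) hx
  rw [coeff_pderiv]
  exact mul_mem (hp i _) (add_mem (natCast_mem s _) (one_mem s))

end Jacobian

section PolynomialMaps

variable {𝕜 : Type*} [NontriviallyNormedField 𝕜] {σ : Type*} [Fintype σ]

theorem MvPolynomial.hasFDerivAt_eval (p : MvPolynomial σ 𝕜) (x : σ → 𝕜) :
    HasFDerivAt (fun y => eval y p)
      (∑ j, eval x (pderiv j p) • ContinuousLinearMap.proj (R := 𝕜) (φ := fun _ : σ => 𝕜) j)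
      x := by
  classical
  induction p using MvPolynomial.induction_on with
  | C a =>
    simp only [eval_C]
    refine (hasFDerivAt_const a x).congr_fderiv ?_
    ext v
    simp
  | add p q hp hq =>
    simp only [map_add]
    refine (hp.fun_add hq).congr_fderiv ?_
    ext v
    simp [add_mul, Finset.sum_add_distrib]
  | mul_X p i hp =>
    simp only [map_mul, eval_X]
    refine (hp.fun_mul (hasFDerivAt_apply i x)).congr_fderiv ?_
    ext v
    simp [mul_add, Finset.sum_add_distrib, Pi.single_apply, apply_ite (eval x), Finset.mul_sum,
      mul_comm, mul_left_comm]

variable [CompleteSpace 𝕜] [DecidableEq σ] {F : (σ → 𝕜) → σ → 𝕜} {p : σ → MvPolynomial σ 𝕜}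

theorem MvPolynomial.hasFDerivAt_of_eval_eq (hF : ∀ x i, F x i = eval x (p i)) (x : σ → 𝕜) :
    HasFDerivAt F (Matrix.toLin' (jacobian p x)).toContinuousLinearMap x := by
  obtain rfl : F = fun x i => eval x (p i) := funext₂ hF
  refine hasFDerivAt_pi'' fun i => (hasFDerivAt_eval (p i) x).congr_fderiv ?_
  ext v
  simp [jacobian, Matrix.mulVec, dotProduct]

theorem MvPolynomial.differentiable_of_eval_eq (hF : ∀ x i, F x i = eval x (p i)) :
    Differentiable 𝕜 F :=
  fun x => (hasFDerivAt_of_eval_eq hF x).differentiableAt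

theorem MvPolynomial.det_fderiv_of_eval_eq (hF : ∀ x i, F x i = eval x (p i)) (x : σ → 𝕜) :
    (fderiv 𝕜 F x).det = (jacobian p x).det :=
  (hasFDerivAt_of_eval_eq hF x).fderiv ▸ LinearMap.det_toLin' _

end PolynomialMaps

theorem period_preserved_of_no_root_general {n : ℕ} (K : Subfield ℂ)
    (f g : (Fin n → ℂ) → (Fin n → ℂ))
    (pf pg : Fin n → MvPolynomial (Fin n) ℂ)
    (hfp : ∀ (x : Fin n → ℂ) (i : Fin n), f x i = MvPolynomial.eval x (pf i))
    (hgp : ∀ (x : Fin n → ℂ) (i : Fin n), g x i = MvPolynomial.eval x (pg i))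
    (hfK : ∀ (i : Fin n) (m : Fin n →₀ ℕ), (pf i).coeff m ∈ K)
    (hgK : ∀ (i : Fin n) (m : Fin n →₀ ℕ), (pg i).coeff m ∈ K)
    (hcomm : f ∘ g = g ∘ f)
    (P : Fin n → ℂ) (hPK : ∀ i : Fin n, P i ∈ K)
    (l : ℕ) (hPl : f^[l] P = P)
    (hcrit : (fderiv ℂ g P).det ≠ 0)
    (hroot : ∀ l₀ : ℕ, l₀ ∣ l → 1 < l₀ →
      ¬ ∃ c ∈ K, c ^ l₀ = (fderiv ℂ (f^[l]) P).det) :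
    f^[l] (g P) = g P ∧ ∀ k : ℕ, 1 ≤ k → k < l → f^[k] (g P) ≠ g P := by
  have hf : Differentiable ℂ f := differentiable_of_eval_eq hfp
  have hg : Differentiable ℂ g := differentiable_of_eval_eq hgp
  have hfg : Function.Commute (f^[l]) g := Function.Commute.iterate_left (fun x => congrFun hcomm x) l
  have hgPl : IsPeriodicPt f l (g P) := (hfg P).trans (congrArg g hPl)
  refine ⟨hgPl, fun k hk hkl hgPk => ?_⟩
  obtain ⟨s, hs, hms⟩ := hgPl.exists_minimalPeriod_mul_eq hgPk hk hkl
  have hmult : (fderiv ℂ f^[minimalPeriod f (g P)] (g P)).det ∈ K := by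
    have horbit j := (mapsTo_of_eval_eq hfp hfK).iterate j (mapsTo_of_eval_eq hgp hgK hPK)
    rw [det_fderiv_iterate hf]
    exact prod_mem fun j _ => det_fderiv_of_eval_eq hfp _ ▸ det_jacobian_mem hfK (horbit j)
  refine hroot s (Dvd.intro_left _ hms) hs ⟨_, hmult, ?_⟩
  rw [← det_fderiv_iterate_mul_of_isPeriodicPt hf (isPeriodicPt_minimalPeriod f (g P)), hms]
  exact det_fderiv_apply_eq_of_commute hfg hPl (hg P) ((hf.iterate l) P) ((hf.iterate l) _) hcrit

/-- Let `K ⊆ ℂ` be a subfield, `f, g : ℂ^n → ℂ^n` commuting polynomial maps with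
coefficients in `K`, and `P ∈ K^n` an `f`-periodic point of exact period `l` which is not a
critical point of `g`.  If for every divisor `l₀ > 1` of `l` the multiplier `det D(f^[l])(P)`
has no `l₀`-th root in `K`, then `g P` is an `f`-periodic point of exact period `l`. -/
theorem period_preserved_of_no_root {n : ℕ} (K : Subfield ℂ)
    (f g : (Fin n → ℂ) → (Fin n → ℂ))
    (pf pg : Fin n → MvPolynomial (Fin n) ℂ)
    (hfp : ∀ (x : Fin n → ℂ) (i : Fin n), f x i = MvPolynomial.eval x (pf i))
    (hgp : ∀ (x : Fin n → ℂ) (i : Fin n), g x i = MvPolynomial.eval x (pg i))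
    (hfK : ∀ (i : Fin n) (m : Fin n →₀ ℕ), (pf i).coeff m ∈ K)
    (hgK : ∀ (i : Fin n) (m : Fin n →₀ ℕ), (pg i).coeff m ∈ K)
    (hcomm : f ∘ g = g ∘ f)
    (P : Fin n → ℂ) (hPK : ∀ i : Fin n, P i ∈ K)
    (l : ℕ) (hl : 1 ≤ l) (hPl : f^[l] P = P)
    (hPexact : ∀ k : ℕ, 1 ≤ k → k < l → f^[k] P ≠ P)
    (hcrit : (fderiv ℂ g P).det ≠ 0)
    (hroot : ∀ l₀ : ℕ, l₀ ∣ l → 1 < l₀ →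
      ¬ ∃ c ∈ K, c ^ l₀ = (fderiv ℂ (f^[l]) P).det) :
    f^[l] (g P) = g P ∧ ∀ k : ℕ, 1 ≤ k → k < l → f^[k] (g P) ≠ g P :=
  period_preserved_of_no_root_general K f g pf pg hfp hgp hfK hgK hcomm P hPK l hPl hcrit hroot
end

section
/- Let f : ℂ^n → ℂ^n be a polynomial map such that Pre(f) is Zariski dense and Pre_{m,l}(f) is a finite set for all integers m > l ≥ 0 (the paper's hypothesis that Pre(f) is of bounded height yields this finiteness via Northcott's theorem). Then for every positive integer d, the set Com(f, d) = {g : ℂ^n → ℂ^n a polynomial map : f ∘ g = g ∘ f and deg g = d} is finite. -/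
/-! Polynomials of degree at most `d` form a finite-dimensional space, so by Zariski density of
`Pre(f)` they are already determined by their values on a finite set `T` of preperiodic points.
For a suitable common `N`, every point of `T` lies in the finite set `S = {x | f^[2N] x = f^[N] x}`,
and a map commuting with `f` sends `S` into itself. Hence an element of `Com(f, d)` is determined
by its restriction `T → S`, and there are only finitely many of those. -/

open Function Set MvPolynomial

theorem exists_finset_biInf_eq_iInf {α ι : Type*} [CompleteLattice α] [WellFoundedLT α]
    (f : ι → α) : ∃ s : Finset ι, ⨅ i ∈ s, f i = ⨅ i, f i := by
  classical
  obtain ⟨_, ⟨s, rfl⟩, hmin⟩ :=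
    wellFounded_lt.has_min (range fun s : Finset ι => ⨅ i ∈ s, f i) (range_nonempty _)
  refine ⟨s, le_antisymm (le_iInf fun j => ?_) (le_iInf₂ fun i _ => iInf_le f i)⟩
  have hins : ⨅ i ∈ insert j s, f i = f j ⊓ ⨅ i ∈ s, f i := Finset.iInf_insert j s f
  have heq : ⨅ i ∈ insert j s, f i = ⨅ i ∈ s, f i :=
    eq_of_le_of_not_lt (hins ▸ inf_le_right) (hmin _ ⟨insert j s, rfl⟩)
  rw [← heq, hins]
  exact inf_le_left

theorem MvPolynomial.exists_finset_subset_eq_zero_of_totalDegree_le {σ K : Type*} [Finite σ]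
    [Field K] (A : Set (σ → K)) (hA : ∀ q : MvPolynomial σ K, (∀ x ∈ A, eval x q = 0) → q = 0)
    (d : ℕ) : ∃ T : Finset (σ → K), ↑T ⊆ A ∧
      ∀ q : MvPolynomial σ K, q.totalDegree ≤ d → (∀ x ∈ T, eval x q = 0) → q = 0 := by
  let V := restrictTotalDegree σ K d
  let vanishing (x : A) : Submodule K V :=
    LinearMap.ker ((aeval (x : σ → K)).toLinearMap ∘ₗ V.subtype)
  have mem_vanishing (x : A) (q : V) : q ∈ vanishing x ↔ eval (x : σ → K) q = 0 := by
    simp [vanishing]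
  obtain ⟨s, hs⟩ := exists_finset_biInf_eq_iInf vanishing
  have hbot : ⨅ x, vanishing x = ⊥ :=
    eq_bot_iff.2 fun q hq => Subtype.ext <| hA q fun x hx =>
      (mem_vanishing ⟨x, hx⟩ q).1 (Submodule.mem_iInf _ |>.1 hq ⟨x, hx⟩)
  refine ⟨s.map (Embedding.subtype _), by simp, fun q hq hqs => ?_⟩
  have hqV : (⟨q, (mem_restrictTotalDegree σ d q).2 hq⟩ : V) ∈ ⨅ x ∈ s, vanishing x := by
    simp only [Submodule.mem_iInf, mem_vanishing]
    exact fun x hx => hqs x (Finset.mem_map_of_mem _ hx)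
  rw [hs, hbot, Submodule.mem_bot] at hqV
  exact congrArg Subtype.val hqV

namespace Function

variable {α : Type*} {f : α → α}

theorem isPeriodicPt_iterate_of_iterate_eq {x : α} {m l N : ℕ} (h : f^[m] x = f^[l] x)
    (hlN : l ≤ N) (hdvd : m - l ∣ N) : IsPeriodicPt f N (f^[N] x) := by
  have hper : IsPeriodicPt f (m - l) (f^[l] x) := by
    rcases le_or_gt l m with hlm | hml
    · rw [IsPeriodicPt, IsFixedPt, ← iterate_add_apply, Nat.sub_add_cancel hlm, h]
    · rw [Nat.sub_eq_zero_of_le hml.le]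
      exact isPeriodicPt_zero f _
  have hN : f^[N - l] (f^[l] x) = f^[N] x := by rw [← iterate_add_apply, Nat.sub_add_cancel hlN]
  exact hN ▸ (hper.apply_iterate (N - l)).trans_dvd hdvd

theorem exists_pos_forall_isPeriodicPt_iterate (T : Finset α)
    (hT : ∀ x ∈ T, ∃ m l : ℕ, l < m ∧ f^[m] x = f^[l] x) :
    ∃ N, 0 < N ∧ ∀ x ∈ T, IsPeriodicPt f N (f^[N] x) := by
  classical
  induction T using Finset.induction_on with
  | empty => exact ⟨1, one_pos, by simp⟩
  | insert a T _ ih =>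
    obtain ⟨N, hN, hTN⟩ := ih fun x hx => hT x (Finset.mem_insert_of_mem hx)
    obtain ⟨m, l, hlm, ha⟩ := hT a (Finset.mem_insert_self a T)
    have hml : 0 < m - l := Nat.sub_pos_of_lt hlm
    refine ⟨N * (m - l) * m, Nat.mul_pos (Nat.mul_pos hN hml) (by omega), fun x hx => ?_⟩
    rcases Finset.mem_insert.1 hx with rfl | hx
    · refine isPeriodicPt_iterate_of_iterate_eq ha ?_ (Dvd.intro_left _ (mul_right_comm ..).symm)
      exact hlm.le.trans (Nat.le_mul_of_pos_left _ (Nat.mul_pos hN hml))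
    · have hNN : f^[N + N] x = f^[N] x := by
        rw [iterate_add_apply]
        exact hTN x hx
      refine isPeriodicPt_iterate_of_iterate_eq hNN ?_ ?_
      · exact Nat.le_mul_of_pos_right _ (Nat.mul_pos hml (by omega)) |>.trans_eq (mul_assoc ..).symm
      · simp [mul_assoc]

theorem Commute.mapsTo_setOf_isPeriodicPt_iterate {g : α → α} (h : Function.Commute f g) (N : ℕ) :
    MapsTo g {x | IsPeriodicPt f N (f^[N] x)} {x | IsPeriodicPt f N (f^[N] x)} := fun x hx => by
  change IsPeriodicPt f N (f^[N] (g x))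
  rw [h.iterate_left N x]
  exact hx.map h.symm

theorem setOf_isPeriodicPt_iterate_eq (N : ℕ) :
    {x | IsPeriodicPt f N (f^[N] x)} = {x | f^[N + N] x = f^[N] x} := by
  simp only [IsPeriodicPt, IsFixedPt, iterate_add_apply]

end Function

theorem Set.Finite.of_mapsTo_of_injOn_domRestrict {α β : Type*} {C : Set (α → β)} {T : Set α}
    {S : Set β} (hT : T.Finite) (hS : S.Finite) (hmaps : ∀ g ∈ C, MapsTo g T S)
    (hinj : InjOn T.domRestrict C) : C.Finite := by
  have : Finite T := hT
  refine Finite.of_finite_image (Finite.subset (Finite.pi fun _ : T => hS) ?_) hinj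
  rintro _ ⟨g, hg, rfl⟩ x -
  exact hmaps g hg x.2

theorem eq_of_eqOn_of_forall_totalDegree_le {σ ι K : Type*} [CommRing K]
    {T : Set (σ → K)} {d : ℕ}
    (hT : ∀ q : MvPolynomial σ K, q.totalDegree ≤ d → (∀ x ∈ T, eval x q = 0) → q = 0)
    {g₁ g₂ : (σ → K) → ι → K} {p₁ p₂ : ι → MvPolynomial σ K}
    (hg₁ : ∀ x i, g₁ x i = eval x (p₁ i)) (hg₂ : ∀ x i, g₂ x i = eval x (p₂ i))
    (hp₁ : ∀ i, (p₁ i).totalDegree ≤ d) (hp₂ : ∀ i, (p₂ i).totalDegree ≤ d)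
    (h : EqOn g₁ g₂ T) : g₁ = g₂ := by
  have hp : p₁ = p₂ := funext fun i => sub_eq_zero.1 <|
    hT _ ((totalDegree_sub _ _).trans (max_le (hp₁ i) (hp₂ i))) fun x hx => by
      rw [map_sub, ← hg₁, ← hg₂, h hx, sub_self]
  funext x i
  rw [hg₁, hg₂, hp]

theorem com_finite_general {n : ℕ} (f : (Fin n → ℂ) → (Fin n → ℂ))
    (hdense : ∀ q : MvPolynomial (Fin n) ℂ,
      (∀ P ∈ {P : Fin n → ℂ | ∃ m l : ℕ, l < m ∧ f^[m] P = f^[l] P},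
        MvPolynomial.eval P q = 0) → q = 0)
    (hfin : ∀ m l : ℕ, l < m → {P : Fin n → ℂ | f^[m] P = f^[l] P}.Finite)
    (d : ℕ) :
    {g : (Fin n → ℂ) → (Fin n → ℂ) |
        (∃ p : Fin n → MvPolynomial (Fin n) ℂ,
            (∀ (x : Fin n → ℂ) (i : Fin n), g x i = MvPolynomial.eval x (p i)) ∧
              Finset.univ.sup (fun i => (p i).totalDegree) = d) ∧
          f ∘ g = g ∘ f}.Finite := by
  obtain ⟨T, hTpre, hT⟩ := exists_finset_subset_eq_zero_of_totalDegree_le _ hdense d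
  obtain ⟨N, hN, hTper⟩ := exists_pos_forall_isPeriodicPt_iterate T fun x hx => hTpre hx
  have hS : {x | IsPeriodicPt f N (f^[N] x)}.Finite :=
    setOf_isPeriodicPt_iterate_eq (f := f) N ▸ hfin (N + N) N (by omega)
  refine T.finite_toSet.of_mapsTo_of_injOn_domRestrict hS ?_ ?_
  · rintro g ⟨-, hfg⟩ x hx
    exact (show Function.Commute f g from congrFun hfg).mapsTo_setOf_isPeriodicPt_iterate N
      (hTper x hx)
  · rintro g₁ ⟨⟨p₁, hg₁, hd₁⟩, -⟩ g₂ ⟨⟨p₂, hg₂, hd₂⟩, -⟩ h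
    refine eq_of_eqOn_of_forall_totalDegree_le hT hg₁ hg₂ (fun i => ?_) (fun i => ?_)
      (domRestrict_eq_domRestrict_iff.1 h)
    · exact hd₁ ▸ Finset.le_sup (f := fun i => (p₁ i).totalDegree) (Finset.mem_univ i)
    · exact hd₂ ▸ Finset.le_sup (f := fun i => (p₂ i).totalDegree) (Finset.mem_univ i)

/-- Let `f : ℂ^n → ℂ^n` be a polynomial map such that `Pre f` is Zariski dense and each
`Pre_{m,l}(f)` is finite.  Then for every `d ≥ 1`, the set of polynomial maps of degree `d`
commuting with `f` is finite. -/
theorem com_finite {n : ℕ} (f : (Fin n → ℂ) → (Fin n → ℂ))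
    (hfpoly : ∃ p : Fin n → MvPolynomial (Fin n) ℂ,
      ∀ (x : Fin n → ℂ) (i : Fin n), f x i = MvPolynomial.eval x (p i))
    (hdense : ∀ q : MvPolynomial (Fin n) ℂ,
      (∀ P ∈ {P : Fin n → ℂ | ∃ m l : ℕ, l < m ∧ f^[m] P = f^[l] P},
        MvPolynomial.eval P q = 0) → q = 0)
    (hfin : ∀ m l : ℕ, l < m → {P : Fin n → ℂ | f^[m] P = f^[l] P}.Finite)
    (d : ℕ) (hd : 1 ≤ d) :
    {g : (Fin n → ℂ) → (Fin n → ℂ) |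
        (∃ p : Fin n → MvPolynomial (Fin n) ℂ,
            (∀ (x : Fin n → ℂ) (i : Fin n), g x i = MvPolynomial.eval x (p i)) ∧
              Finset.univ.sup (fun i => (p i).totalDegree) = d) ∧
          f ∘ g = g ∘ f}.Finite :=
  com_finite_general f hdense hfin d
end

section
/- Let f : ℂ^n → ℂ^n be a polynomial map such that Pre(f) is Zariski dense and Pre_{m,l}(f) is finite for all integers m > l ≥ 0. If (g_k)_{k ∈ ℕ} is a sequence of pairwise distinct polynomial maps ℂ^n → ℂ^n each commuting with f (f ∘ g_k = g_k ∘ f for all k), then deg g_k → ∞ as k → ∞. -/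
/-!
Polynomials of total degree at most `d` form an Artinian module, so the Zariski density
of `Pre(f)` is already witnessed, in degree `≤ d`, by a finite set `T ⊆ Pre(f)`: a polynomial map
of degree `≤ d` is determined by its values on `T`. A map commuting with `f` sends each
`Pre_{m,l}(f)` into itself, and these sets are finite, so maps commuting with `f` have only
finitely many possible restrictions to `T`. Hence only finitely many of the pairwise distinct
`g_k` have degree `≤ d`.
-/

open MvPolynomial

namespace MvPolynomial

variable {σ R : Type*} [CommRing R]

theorem exists_finset_subset_eq_zero_of_forall_eval_eq_zero [IsArtinianRing R] [Finite σ]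
    {S : Set (σ → R)} (hS : ∀ q : MvPolynomial σ R, (∀ x ∈ S, eval x q = 0) → q = 0) (d : ℕ) :
    ∃ T : Finset (σ → R), ↑T ⊆ S ∧
      ∀ q ∈ restrictTotalDegree σ R d, (∀ x ∈ T, eval x q = 0) → q = 0 := by
  classical
  let V := restrictTotalDegree σ R d
  let K : Finset (σ → R) → Submodule R V := fun T =>
    ⨅ x ∈ T, LinearMap.ker ((aeval x).toLinearMap ∘ₗ V.subtype)
  have mem_K : ∀ T (v : V), v ∈ K T ↔ ∀ x ∈ T, eval x (v : MvPolynomial σ R) = 0 := by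
    simp [K, Submodule.mem_iInf]
  obtain ⟨_, ⟨T, hTS, rfl⟩, hmin⟩ :=
    IsArtinian.set_has_minimal {N | ∃ T : Finset (σ → R), ↑T ⊆ S ∧ K T = N} ⟨_, ∅, by simp, rfl⟩
  refine ⟨T, hTS, fun q hq hqT => by_contra fun hq0 => ?_⟩
  obtain ⟨x, hxS, hx⟩ : ∃ x ∈ S, eval x q ≠ 0 := by
    by_contra! h
    exact hq0 (hS q h)
  refine hmin (K (insert x T)) ⟨insert x T, by simp [Set.insert_subset_iff, hxS, hTS], rfl⟩
    (SetLike.lt_iff_le_and_exists.mpr ⟨fun v hv => ?_, ⟨q, hq⟩, (mem_K T _).mpr hqT, ?_⟩)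
  · exact (mem_K T v).mpr fun y hy => (mem_K _ v).mp hv y (Finset.mem_insert_of_mem hy)
  · exact fun h => hx ((mem_K _ _).mp h x (Finset.mem_insert_self x T))

theorem eq_of_eqOn_of_totalDegree_le {ι : Type*} {T : Set (σ → R)} {d : ℕ}
    (hT : ∀ q ∈ restrictTotalDegree σ R d, (∀ x ∈ T, eval x q = 0) → q = 0)
    {g g' : (σ → R) → ι → R} {p p' : ι → MvPolynomial σ R}
    (hg : ∀ x i, g x i = eval x (p i)) (hg' : ∀ x i, g' x i = eval x (p' i))
    (hp : ∀ i, (p i).totalDegree ≤ d) (hp' : ∀ i, (p' i).totalDegree ≤ d) (h : T.EqOn g g') :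
    g = g' := by
  have hpp' : p = p' := by
    funext i
    rw [← sub_eq_zero]
    refine hT _ (Submodule.sub_mem _ ((mem_restrictTotalDegree ..).mpr (hp i))
      ((mem_restrictTotalDegree ..).mpr (hp' i))) fun x hx => ?_
    rw [map_sub, ← hg, ← hg', h hx, sub_self]
  funext x i
  rw [hg, hg', hpp']

end MvPolynomial

theorem Function.Commute.iterate_apply_eq_of_iterate_eq {α : Type*} {f g : α → α}
    (h : Function.Commute f g) {m l : ℕ} {x : α} (hx : f^[m] x = f^[l] x) :
    f^[m] (g x) = f^[l] (g x) := by
  rw [h.iterate_left m x, h.iterate_left l x, hx]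

theorem Set.finite_image_domRestrict_setOf_commute {α : Type*} {f : α → α} {T : Set α}
    [Finite T] (hT : ∀ x ∈ T, ∃ m l : ℕ, l < m ∧ f^[m] x = f^[l] x)
    (hfin : ∀ m l : ℕ, l < m → {x | f^[m] x = f^[l] x}.Finite) :
    (T.domRestrict '' {g | Function.Commute f g}).Finite := by
  choose m l hml hx using fun x : T => hT x x.2
  refine (Set.Finite.pi fun x => hfin (m x) (l x) (hml x)).subset ?_
  rintro _ ⟨g, hg, rfl⟩ x -
  exact hg.iterate_apply_eq_of_iterate_eq (hx x)

theorem degrees_tendsto_atTop_general {n : ℕ} (f : (Fin n → ℂ) → (Fin n → ℂ))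
    (hdense : ∀ q : MvPolynomial (Fin n) ℂ,
      (∀ P ∈ {P : Fin n → ℂ | ∃ m l : ℕ, l < m ∧ f^[m] P = f^[l] P},
        MvPolynomial.eval P q = 0) → q = 0)
    (hfin : ∀ m l : ℕ, l < m → {P : Fin n → ℂ | f^[m] P = f^[l] P}.Finite)
    (G : ℕ → (Fin n → ℂ) → (Fin n → ℂ)) (D : ℕ → ℕ)
    (hG : ∀ k : ℕ, ∃ p : Fin n → MvPolynomial (Fin n) ℂ,
        (∀ (x : Fin n → ℂ) (i : Fin n), G k x i = MvPolynomial.eval x (p i)) ∧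
          Finset.univ.sup (fun i => (p i).totalDegree) = D k)
    (hdist : ∀ k k' : ℕ, k ≠ k' → G k ≠ G k')
    (hcomm : ∀ k : ℕ, f ∘ G k = G k ∘ f) :
    Filter.Tendsto D Filter.atTop Filter.atTop := by
  refine ((northcott_iff_tendsto D).mp ⟨fun d => ?_⟩).mono_left Nat.cofinite_eq_atTop.ge
  obtain ⟨T, hTS, hT⟩ := exists_finset_subset_eq_zero_of_forall_eval_eq_zero hdense d
  have hdeg : ∀ k, D k ≤ d → ∃ p : Fin n → MvPolynomial (Fin n) ℂ,
      (∀ x i, G k x i = eval x (p i)) ∧ ∀ i, (p i).totalDegree ≤ d := fun k hk =>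
    (hG k).imp fun p ⟨hp, hpD⟩ => ⟨hp, fun i => Finset.sup_le_iff.mp (hpD.trans_le hk) i
      (Finset.mem_univ i)⟩
  refine Set.Finite.of_finite_image (f := fun k => (T : Set (Fin n → ℂ)).domRestrict (G k))
    ((Set.finite_image_domRestrict_setOf_commute hTS hfin).subset ?_) fun k hk k' hk' heq => ?_
  · rintro _ ⟨k, -, rfl⟩
    exact ⟨G k, fun x => congrFun (hcomm k) x, rfl⟩
  · obtain ⟨p, hp, hpd⟩ := hdeg k hk
    obtain ⟨p', hp', hpd'⟩ := hdeg k' hk'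
    by_contra hne
    exact hdist k k' hne (eq_of_eqOn_of_totalDegree_le hT hp hp' hpd hpd'
      fun x hx => congrFun heq ⟨x, hx⟩)

/-- Let `f : ℂ^n → ℂ^n` be a polynomial map such that `Pre f` is Zariski dense and each
`Pre_{m,l}(f)` is finite.  If `(G k)` is a sequence of pairwise distinct polynomial maps
commuting with `f`, with `D k` the degree of `G k`, then `D k → ∞`. -/
theorem degrees_tendsto_atTop {n : ℕ} (f : (Fin n → ℂ) → (Fin n → ℂ))
    (hfpoly : ∃ p : Fin n → MvPolynomial (Fin n) ℂ,
      ∀ (x : Fin n → ℂ) (i : Fin n), f x i = MvPolynomial.eval x (p i))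
    (hdense : ∀ q : MvPolynomial (Fin n) ℂ,
      (∀ P ∈ {P : Fin n → ℂ | ∃ m l : ℕ, l < m ∧ f^[m] P = f^[l] P},
        MvPolynomial.eval P q = 0) → q = 0)
    (hfin : ∀ m l : ℕ, l < m → {P : Fin n → ℂ | f^[m] P = f^[l] P}.Finite)
    (G : ℕ → (Fin n → ℂ) → (Fin n → ℂ)) (D : ℕ → ℕ)
    (hG : ∀ k : ℕ, ∃ p : Fin n → MvPolynomial (Fin n) ℂ,
        (∀ (x : Fin n → ℂ) (i : Fin n), G k x i = MvPolynomial.eval x (p i)) ∧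
          Finset.univ.sup (fun i => (p i).totalDegree) = D k)
    (hdist : ∀ k k' : ℕ, k ≠ k' → G k ≠ G k')
    (hcomm : ∀ k : ℕ, f ∘ G k = G k ∘ f) :
    Filter.Tendsto D Filter.atTop Filter.atTop :=
  degrees_tendsto_atTop_general f hdense hfin G D hG hdist hcomm
end

section
/- Let f, g : ℂ² → ℂ² be given by f(x, y) = (x², y²) and g(x, y) = (x, xy). Then f ∘ g = g ∘ f, and the inclusions of Proposition 2.2 and 2.3 are strict for this pair: (0, 1) ∈ Pre(f) but (0, 1) ∉ g(Pre(f)) (indeed the only point of the image of g on the line {0} × ℂ is (0,0)), so g(Pre(f)) ⊊ Pre(f); and (0, 2) ∈ Pre(g) but (0, 2) ∉ Pre(f), so Pre(f) ⊊ Pre(g). -/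
/-- The set of preperiodic points of a self-map. -/
def preperSet {V : Type*} (f : V → V) : Set V :=
  {P | ∃ m l : ℕ, l < m ∧ f^[m] P = f^[l] P}

/-- The map `f(x,y) = (x², y²)`. -/
noncomputable def fSq : ℂ × ℂ → ℂ × ℂ := fun p => (p.1 ^ 2, p.2 ^ 2)

/-- The map `g(x,y) = (x, xy)`. -/
noncomputable def gEx : ℂ × ℂ → ℂ × ℂ := fun p => (p.1, p.1 * p.2)

/-!
`g` maps `f`-preperiodic points to `f`-preperiodic points because it commutes with `f`, but its
image meets the line `x = 0` only at the origin, so it misses `(0, 1)`. Since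
`gⁿ(x, y) = (x, xⁿ y)` and `f^k(x, y) = (x^{2^k}, y^{2^k})`, a relation `x^{2^m} = x^{2^l}` coming
from an `f`-preperiodic point gives `g^{2^m} = g^{2^l}` at that point, whereas `(0, 2)` escapes
under `f` (`|2| > 1`) and is sent by `g` to the fixed point `(0, 0)`.
-/

section Preperiodic

variable {V : Type*}

theorem mem_preperSet_of_isFixedPt_apply {f : V → V} {P : V} (h : Function.IsFixedPt f (f P)) :
    P ∈ preperSet f :=
  ⟨2, 1, one_lt_two, h⟩

theorem image_preperSet_subset_of_commute {f g : V → V} (h : Function.Commute f g) :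
    g '' preperSet f ⊆ preperSet f := by
  rintro _ ⟨P, ⟨m, l, hlm, hP⟩, rfl⟩
  exact ⟨m, l, hlm, by rw [(h.iterate_left m).eq, (h.iterate_left l).eq, hP]⟩

end Preperiodic

theorem fSq_comp_gEx : fSq ∘ gEx = gEx ∘ fSq := by
  funext p
  simp only [Function.comp_apply, fSq, gEx, mul_pow]

theorem fSq_iterate (n : ℕ) (p : ℂ × ℂ) : fSq^[n] p = (p.1 ^ 2 ^ n, p.2 ^ 2 ^ n) := by
  induction n generalizing p with
  | zero => simp
  | succ n ih =>
    rw [Function.iterate_succ_apply, ih]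
    simp only [fSq, ← pow_mul, ← pow_succ']

theorem gEx_iterate (n : ℕ) (p : ℂ × ℂ) : gEx^[n] p = (p.1, p.1 ^ n * p.2) := by
  induction n generalizing p with
  | zero => simp
  | succ n ih =>
    rw [Function.iterate_succ_apply, ih]
    simp only [gEx, pow_succ, mul_assoc]

theorem eq_zero_of_mem_range_gEx_of_fst_eq_zero {q : ℂ × ℂ} (hq : q ∈ Set.range gEx)
    (h : q.1 = 0) : q = (0, 0) := by
  obtain ⟨p, rfl⟩ := hq
  simp only [gEx] at h ⊢
  rw [h, zero_mul]

theorem not_mem_preperSet_fSq_of_one_lt_norm {p : ℂ × ℂ} (hp : 1 < ‖p.2‖) :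
    p ∉ preperSet fSq := by
  rintro ⟨m, l, hlm, h⟩
  rw [fSq_iterate, fSq_iterate, Prod.mk.injEq] at h
  have hlt : ‖p.2‖ ^ 2 ^ l < ‖p.2‖ ^ 2 ^ m :=
    pow_lt_pow_right₀ hp (Nat.pow_lt_pow_right one_lt_two hlm)
  rw [← norm_pow, ← norm_pow, h.2] at hlt
  exact lt_irrefl _ hlt

theorem preperSet_fSq_subset_preperSet_gEx : preperSet fSq ⊆ preperSet gEx := by
  rintro p ⟨m, l, hlm, h⟩
  rw [fSq_iterate, fSq_iterate, Prod.mk.injEq] at h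
  refine ⟨2 ^ m, 2 ^ l, Nat.pow_lt_pow_right one_lt_two hlm, ?_⟩
  rw [gEx_iterate, gEx_iterate, h.1]

/-- For `f(x,y) = (x², y²)` and `g(x,y) = (x, xy)`: the maps commute, `(0,1)` lies in
`Pre f` but not in `g (Pre f)` (indeed the only point of the image of `g` on the line
`{0} × ℂ` is `(0,0)`), so `g (Pre f) ⊊ Pre f`; and `(0,2) ∈ Pre g` but `(0,2) ∉ Pre f`,
so `Pre f ⊊ Pre g`. -/
theorem strict_inclusions_example :
    fSq ∘ gEx = gEx ∘ fSq ∧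
    ((0 : ℂ), (1 : ℂ)) ∈ preperSet fSq ∧
    ((0 : ℂ), (1 : ℂ)) ∉ gEx '' preperSet fSq ∧
    (∀ q ∈ Set.range gEx, q.1 = 0 → q = ((0 : ℂ), (0 : ℂ))) ∧
    gEx '' preperSet fSq ⊂ preperSet fSq ∧
    ((0 : ℂ), (2 : ℂ)) ∈ preperSet gEx ∧
    ((0 : ℂ), (2 : ℂ)) ∉ preperSet fSq ∧
    preperSet fSq ⊂ preperSet gEx := by
  have h01_mem : ((0 : ℂ), (1 : ℂ)) ∈ preperSet fSq :=
    mem_preperSet_of_isFixedPt_apply (by simp [Function.IsFixedPt, fSq])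
  have h01_not : ((0 : ℂ), (1 : ℂ)) ∉ gEx '' preperSet fSq := by
    rintro ⟨p, -, hp⟩
    simpa using eq_zero_of_mem_range_gEx_of_fst_eq_zero ⟨p, hp⟩ rfl
  have h02_mem : ((0 : ℂ), (2 : ℂ)) ∈ preperSet gEx :=
    mem_preperSet_of_isFixedPt_apply (by simp [Function.IsFixedPt, gEx])
  have h02_not : ((0 : ℂ), (2 : ℂ)) ∉ preperSet fSq :=
    not_mem_preperSet_fSq_of_one_lt_norm (by norm_num)
  have hsub := image_preperSet_subset_of_commute (f := fSq) (g := gEx) (congrFun fSq_comp_gEx)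
  exact ⟨fSq_comp_gEx, h01_mem, h01_not, fun _ => eq_zero_of_mem_range_gEx_of_fst_eq_zero,
    hsub.ssubset_of_mem_notMem h01_mem h01_not, h02_mem, h02_not,
    preperSet_fSq_subset_preperSet_gEx.ssubset_of_mem_notMem h02_mem h02_not⟩
end

section
/- A connected family of maps commuting with f is constant: let f : ℂ^n → ℂ^n be a map such that Per_m(f) is finite for every m ≥ 1 and Per(f) = ⋃_m Per_m(f) is Zariski dense in ℂ^n. Let T be a connected topological space and let ψ : T → (ℂ^n → ℂ^n) assign to each t a polynomial map ψ_t with f ∘ ψ_t = ψ_t ∘ f, such that for each P ∈ ℂ^n the map t ↦ ψ_t(P) is continuous (ℂ^n with its standard topology). Then ψ_s = ψ_t for all s, t ∈ T. -/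
/-!
For a periodic point `P` of period `m`, every `ψ t` maps the finite set `Per_m(f)` to itself,
so `t ↦ ψ t P` is a continuous map from a connected space into a finite subset of a `T₁` space,
hence constant. Thus any two `ψ s`, `ψ t` agree on `Per(f)`; their coordinates are polynomials
agreeing on a Zariski dense set, hence equal.
-/

open Function

theorem PreconnectedSpace.constant_of_forall_mem_finite {T X : Type*} [TopologicalSpace T]
    [PreconnectedSpace T] [TopologicalSpace X] [T1Space X] {g : T → X} (hg : Continuous g)
    {S : Set X} (hS : S.Finite) (hgS : ∀ t, g t ∈ S) (s t : T) : g s = g t :=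
  isPreconnected_univ.constant_of_mapsTo hS.isDiscrete hg.continuousOn (fun t _ ↦ hgS t)
    trivial trivial

theorem eqOn_periodicPts_of_continuous_of_commute {T X : Type*} [TopologicalSpace T]
    [PreconnectedSpace T] [TopologicalSpace X] [T1Space X] {f : X → X}
    (hfin : ∀ m, 1 ≤ m → (ptsOfPeriod f m).Finite) {ψ : T → X → X}
    (hcomm : ∀ t, Function.Commute f (ψ t)) (hcont : ∀ P, Continuous fun t ↦ ψ t P) (s t : T) :
    Set.EqOn (ψ s) (ψ t) (periodicPts f) := by
  rintro P ⟨m, hm, hP⟩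
  exact PreconnectedSpace.constant_of_forall_mem_finite (hcont P) (hfin m hm)
    (fun u ↦ hP.map (hcomm u).symm) s t

namespace MvPolynomial

variable {σ ι R : Type*} [CommRing R]

def IsZariskiDense (S : Set (σ → R)) : Prop :=
  ∀ q : MvPolynomial σ R, (∀ P ∈ S, eval P q = 0) → q = 0

def IsPolynomialMap (g : (σ → R) → ι → R) : Prop :=
  ∃ p : ι → MvPolynomial σ R, ∀ x i, g x i = eval x (p i)

theorem IsZariskiDense.eq_of_eqOn {S : Set (σ → R)} (hS : IsZariskiDense S)
    {p q : MvPolynomial σ R} (h : ∀ P ∈ S, eval P p = eval P q) : p = q :=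
  sub_eq_zero.mp <| hS _ fun P hP ↦ by rw [map_sub, h P hP, sub_self]

theorem IsPolynomialMap.eq_of_eqOn {S : Set (σ → R)} (hS : IsZariskiDense S)
    {g h : (σ → R) → ι → R} (hg : IsPolynomialMap g) (hh : IsPolynomialMap h)
    (hgh : Set.EqOn g h S) : g = h := by
  obtain ⟨p, hp⟩ := hg
  obtain ⟨q, hq⟩ := hh
  have hpq : p = q := by
    ext1 i
    exact hS.eq_of_eqOn fun P hP ↦ by rw [← hp, ← hq, hgh hP]
  ext x i
  rw [hp, hq, hpq]

end MvPolynomial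

/-- A connected family of polynomial maps commuting with `f` is constant: if every
`Per_m(f)` is finite and `Per(f)` is Zariski dense, `T` is a connected topological space,
and `ψ : T → (ℂ^n → ℂ^n)` is a family of polynomial maps commuting with `f` such that
`t ↦ ψ t P` is continuous for every `P`, then all the `ψ t` coincide. -/
theorem connected_family_constant {n : ℕ} (f : (Fin n → ℂ) → (Fin n → ℂ))
    (hfin : ∀ m : ℕ, 1 ≤ m → {P : Fin n → ℂ | f^[m] P = P}.Finite)
    (hdense : ∀ q : MvPolynomial (Fin n) ℂ,
      (∀ P : Fin n → ℂ, (∃ m : ℕ, 1 ≤ m ∧ f^[m] P = P) → MvPolynomial.eval P q = 0) →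
        q = 0)
    (T : Type*) [TopologicalSpace T] [ConnectedSpace T]
    (ψ : T → (Fin n → ℂ) → (Fin n → ℂ))
    (hpoly : ∀ t : T, ∃ p : Fin n → MvPolynomial (Fin n) ℂ,
      ∀ (x : Fin n → ℂ) (i : Fin n), ψ t x i = MvPolynomial.eval x (p i))
    (hcomm : ∀ t : T, f ∘ ψ t = ψ t ∘ f)
    (hcont : ∀ P : Fin n → ℂ, Continuous fun t => ψ t P) :
    ∀ s t : T, ψ s = ψ t := by
  have hdense' : MvPolynomial.IsZariskiDense (periodicPts f) := hdense
  intro s t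
  have hagree : Set.EqOn (ψ s) (ψ t) (periodicPts f) :=
    eqOn_periodicPts_of_continuous_of_commute hfin (fun u ↦ congrFun (hcomm u)) hcont s t
  exact MvPolynomial.IsPolynomialMap.eq_of_eqOn hdense' (hpoly s) (hpoly t) hagree
end

section
/- There exist polynomial maps with infinitely many commuting maps of each degree: let f : ℂ³ → ℂ³ be f(x, y, z) = (y, x, z²). For every d ≥ 1 and every polynomial P ∈ ℂ[x, y] of degree at most d, the polynomial map g_P(x, y, z) = (P(x, y), P(y, x), z^d) satisfies f ∘ g_P = g_P ∘ f, and distinct polynomials P give distinct maps g_P; consequently Com(f, d) = {g : ℂ³ → ℂ³ a polynomial map : f ∘ g = g ∘ f and deg g = d} is infinite. -/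
/-- The map `f(x, y, z) = (y, x, z²)` on `ℂ³`. -/
noncomputable def fEx : (Fin 3 → ℂ) → (Fin 3 → ℂ) := fun x => ![x 1, x 0, x 2 ^ 2]

/-- The map `g_P(x, y, z) = (P(x, y), P(y, x), z^d)` on `ℂ³`. -/
noncomputable def gPEx (d : ℕ) (P : MvPolynomial (Fin 2) ℂ) :
    (Fin 3 → ℂ) → (Fin 3 → ℂ) :=
  fun x => ![MvPolynomial.eval ![x 0, x 1] P, MvPolynomial.eval ![x 1, x 0] P, x 2 ^ d]

open MvPolynomial

lemma fEx_comp_gPEx (d : ℕ) (P : MvPolynomial (Fin 2) ℂ) :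
    fEx ∘ gPEx d P = gPEx d P ∘ fEx := by
  funext x i
  fin_cases i <;> simp [fEx, gPEx, ← pow_mul, Nat.mul_comm]

lemma gPEx_injective (d : ℕ) : Function.Injective (gPEx d) := by
  intro P Q h
  refine MvPolynomial.funext fun v => ?_
  have hv : ![v 0, v 1] = v := by
    funext i; fin_cases i <;> rfl
  simpa only [gPEx, Matrix.cons_val_zero, Matrix.cons_val_one, Matrix.head_cons, hv]
    using congrFun (congrFun h ![v 0, v 1, 0]) 0

noncomputable def gPExCoords (d : ℕ) (P : MvPolynomial (Fin 2) ℂ) :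
    Fin 3 → MvPolynomial (Fin 3) ℂ :=
  ![rename ![0, 1] P, rename ![1, 0] P, X 2 ^ d]

lemma gPEx_apply_eq_eval_gPExCoords (d : ℕ) (P : MvPolynomial (Fin 2) ℂ)
    (x : Fin 3 → ℂ) (i : Fin 3) : gPEx d P x i = eval x (gPExCoords d P i) := by
  fin_cases i <;> simp [gPEx, gPExCoords, eval_rename] <;>
    (congr 2; funext j; fin_cases j <;> rfl)

lemma sup_totalDegree_gPExCoords {d : ℕ} {P : MvPolynomial (Fin 2) ℂ}
    (hP : P.totalDegree ≤ d) :
    Finset.univ.sup (fun i => (gPExCoords d P i).totalDegree) = d := by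
  refine le_antisymm (Finset.sup_le fun i _ => ?_) ?_
  · fin_cases i
    · exact (totalDegree_rename_le _ P).trans hP
    · exact (totalDegree_rename_le _ P).trans hP
    · simp [gPExCoords, totalDegree_X_pow]
  · simpa [gPExCoords, totalDegree_X_pow] using
      Finset.le_sup (f := fun i => (gPExCoords d P i).totalDegree) (Finset.mem_univ 2)

theorem com_infinite_example_general (d : ℕ) :
    (∀ P : MvPolynomial (Fin 2) ℂ, P.totalDegree ≤ d → fEx ∘ gPEx d P = gPEx d P ∘ fEx) ∧
    (∀ P Q : MvPolynomial (Fin 2) ℂ, P.totalDegree ≤ d → Q.totalDegree ≤ d →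
      P ≠ Q → gPEx d P ≠ gPEx d Q) ∧
    {g : (Fin 3 → ℂ) → (Fin 3 → ℂ) |
        (∃ p : Fin 3 → MvPolynomial (Fin 3) ℂ,
            (∀ (x : Fin 3 → ℂ) (i : Fin 3), g x i = MvPolynomial.eval x (p i)) ∧
              Finset.univ.sup (fun i => (p i).totalDegree) = d) ∧
          fEx ∘ g = g ∘ fEx}.Infinite := by
  refine ⟨fun P _ => fEx_comp_gPEx d P, fun P Q _ _ hne h => hne (gPEx_injective d h), ?_⟩
  -- already the maps `g_P` with `P` constant form an infinite family
  refine Set.infinite_of_injective_forall_mem ((gPEx_injective d).comp (C_injective _ ℂ))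
    fun c => ⟨⟨gPExCoords d (C c), gPEx_apply_eq_eval_gPExCoords d _, ?_⟩, fEx_comp_gPEx d _⟩
  exact sup_totalDegree_gPExCoords (by simp)

/-- For `f(x,y,z) = (y,x,z²)` and any `d ≥ 1`: every `g_P` with `deg P ≤ d` commutes with
`f`, distinct polynomials give distinct maps, and consequently the set of polynomial maps
of degree `d` commuting with `f` is infinite. -/
theorem com_infinite_example (d : ℕ) (hd : 1 ≤ d) :
    (∀ P : MvPolynomial (Fin 2) ℂ, P.totalDegree ≤ d → fEx ∘ gPEx d P = gPEx d P ∘ fEx) ∧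
    (∀ P Q : MvPolynomial (Fin 2) ℂ, P.totalDegree ≤ d → Q.totalDegree ≤ d →
      P ≠ Q → gPEx d P ≠ gPEx d Q) ∧
    {g : (Fin 3 → ℂ) → (Fin 3 → ℂ) |
        (∃ p : Fin 3 → MvPolynomial (Fin 3) ℂ,
            (∀ (x : Fin 3 → ℂ) (i : Fin 3), g x i = MvPolynomial.eval x (p i)) ∧
              Finset.univ.sup (fun i => (p i).totalDegree) = d) ∧
          fEx ∘ g = g ∘ fEx}.Infinite :=
  com_infinite_example_general d
end
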